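/- arXiv:2501.02893 — 2 statements merged into one kernel-verified Lean document; each statement's English description precedes it below -/
import Mathlib

section
/- Let [l,u] and [l',u'] be boxes in ℝⁿ with [l',u'] ⊆ [l,u] (i.e., l ≤ l' and u' ≤ u componentwise), and let c = (l+u)/2 and c' = (l'+u')/2 be their centers. Then Vol̄([l,u]) − Vol̄([l',u']) ≥ 2‖c' − c‖₁, where Vol̄([l,u]) = Σᵢ (u(i) − l(i)) and ‖v‖₁ = Σᵢ |v(i)|. -/
open Finset

noncomputable def volBar {n : ℕ} (l u : Fin n → ℝ) : ℝ := ∑ i, (u i - l i)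

noncomputable def norm1 {n : ℕ} (v : Fin n → ℝ) : ℝ := ∑ i, |v i|

section Interval

variable {K : Type*} [Field K] [LinearOrder K] [IsStrictOrderedRing K]

/-- Twice the midpoint shift is `(l' - l) - (u - u')`, a difference of two nonnegative numbers
whose sum is the loss in length. -/
theorem two_mul_abs_midpoint_sub_le_length_sub {l u l' u' : K} (hl : l ≤ l') (hu : u' ≤ u) :
    2 * |(l' + u') / 2 - (l + u) / 2| ≤ (u - l) - (u' - l') := by
  rw [← abs_two, ← abs_mul, abs_le]
  constructor <;> linarith

end Interval

theorem volBar_sub_volBar {n : ℕ} (l u l' u' : Fin n → ℝ) :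
    volBar l u - volBar l' u' = ∑ i, ((u i - l i) - (u' i - l' i)) := by
  rw [volBar, volBar, ← sum_sub_distrib]

theorem two_mul_norm1 {n : ℕ} (v : Fin n → ℝ) : 2 * norm1 v = ∑ i, 2 * |v i| := by
  rw [norm1, mul_sum]

theorem volume_reduction_lower_bound_general {n : ℕ}
    (l u l' u' c c' : Fin n → ℝ)
    (hl : l ≤ l') (hu : u' ≤ u)
    (hc : c = (l + u) / 2) (hc' : c' = (l' + u') / 2) :
    volBar l u - volBar l' u' ≥ 2 * norm1 (c' - c) := by
  subst hc hc'
  rw [ge_iff_le, volBar_sub_volBar, two_mul_norm1]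
  exact sum_le_sum fun i _ => two_mul_abs_midpoint_sub_le_length_sub (hl i) (hu i)

/-- Lower bound of Theorem 1: for nested boxes, the surrogate-volume reduction
is at least twice the 1-norm of the shift of the centers. -/
theorem volume_reduction_lower_bound {n : ℕ}
    (l u l' u' c c' : Fin n → ℝ)
    (hl : l ≤ l') (hu : u' ≤ u) (hlu' : l' ≤ u')
    (hc : c = (l + u) / 2) (hc' : c' = (l' + u') / 2) :
    volBar l u - volBar l' u' ≥ 2 * norm1 (c' - c) :=
  volume_reduction_lower_bound_general l u l' u' c c' hl hu hc hc'
end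

section
/- Let A3, A4, B2 be n×n real matrices. Let [l_x,u_x] ⊇ [l_x',u_x'] and [l_y,u_y] ⊇ [l_y',u_y'] be nested boxes in ℝⁿ, and let [l_w,u_w] be a box in ℝⁿ. Define 𝒴prior = Ψ(A3)[l_x,u_x] ⊕ Ψ(A4)[l_y,u_y] ⊕ Ψ(B2)[l_w,u_w] and 𝒴post = Ψ(A3)[l_x',u_x'] ⊕ Ψ(A4)[l_y',u_y'] ⊕ Ψ(B2)[l_w,u_w], with centers c_prior and c_post. Then the posterior surrogate volume is sandwiched as: Vol̄(𝒴prior) − ‖A3‖₁·(Vol̄([l_x,u_x]) − Vol̄([l_x',u_x'])) − ‖A4‖₁·(Vol̄([l_y,u_y]) − Vol̄([l_y',u_y'])) ≤ Vol̄(𝒴post) ≤ Vol̄(𝒴prior) − 2‖c_post − c_prior‖₁. -/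
open Matrix Finset

/-- Entrywise absolute value of a matrix. -/
noncomputable def matAbs {n : ℕ} (A : Matrix (Fin n) (Fin n) ℝ) :
    Matrix (Fin n) (Fin n) ℝ := Matrix.of fun i j => |A i j|

/-- A⁺ = (A + |A|)/2. -/
noncomputable def matPos {n : ℕ} (A : Matrix (Fin n) (Fin n) ℝ) :
    Matrix (Fin n) (Fin n) ℝ := Matrix.of fun i j => (A i j + |A i j|) / 2

/-- A⁻ = (A − |A|)/2. -/
noncomputable def matNeg {n : ℕ} (A : Matrix (Fin n) (Fin n) ℝ) :
    Matrix (Fin n) (Fin n) ℝ := Matrix.of fun i j => (A i j - |A i j|) / 2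

/-- Lower endpoint of Ψ(A)[l,u]. -/
noncomputable def psiLo {n : ℕ} (A : Matrix (Fin n) (Fin n) ℝ) (l u : Fin n → ℝ) :
    Fin n → ℝ := (matPos A).mulVec l + (matNeg A).mulVec u

/-- Upper endpoint of Ψ(A)[l,u]. -/
noncomputable def psiHi {n : ℕ} (A : Matrix (Fin n) (Fin n) ℝ) (l u : Fin n → ℝ) :
    Fin n → ℝ := (matNeg A).mulVec l + (matPos A).mulVec u

/-- Entrywise 1-norm of a matrix: Σ_{i,j} |a_{ij}|. -/
noncomputable def mat1Norm {n : ℕ} (A : Matrix (Fin n) (Fin n) ℝ) : ℝ :=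
  ∑ i, ∑ j, |A i j|

/-! Ψ(A) maps a box of widths `d` to a box of widths `|A| d`, and widths add under Minkowski
sums, so shrinking the input boxes lowers the output volume by `Σᵢⱼ |aᵢⱼ| δⱼ`, at most
`‖A‖₁ Σⱼ δⱼ`. Since the entries of `A⁺` are nonnegative and those of `A⁻` nonpositive, Ψ(A)
is monotone for inclusion, so the posterior box lies inside the prior one; in each coordinate
a subinterval loses at least twice the shift of its midpoint. -/

section Box

variable {n : ℕ}

lemma volBar_add (l₁ u₁ l₂ u₂ : Fin n → ℝ) :
    volBar (l₁ + l₂) (u₁ + u₂) = volBar l₁ u₁ + volBar l₂ u₂ := by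
  simp only [volBar, Pi.add_apply, ← sum_add_distrib]
  exact sum_congr rfl fun i _ => by ring

lemma abs_midpoint_sub_le {a b a' b' : ℝ} (ha : a ≤ a') (hb : b' ≤ b) :
    2 * |(a' + b') / 2 - (a + b) / 2| ≤ (b - a) - (b' - a') := by
  rcases abs_cases ((a' + b') / 2 - (a + b) / 2) with ⟨h, -⟩ | ⟨h, -⟩ <;> linarith

lemma volBar_le_sub_norm1_center_sub {l u l' u' : Fin n → ℝ} (hl : l ≤ l') (hu : u' ≤ u) :
    volBar l' u' ≤ volBar l u - 2 * norm1 ((l' + u') / 2 - (l + u) / 2) := by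
  simp only [volBar, norm1, mul_sum, ← sum_sub_distrib]
  refine sum_le_sum fun i _ => ?_
  simp only [Pi.sub_apply, Pi.div_apply, Pi.add_apply, Pi.ofNat_apply]
  linarith [abs_midpoint_sub_le (hl i) (hu i)]

end Box

section MulVec

variable {m ι : Type*} [Fintype ι] {M : Matrix m ι ℝ} {v w : ι → ℝ}

lemma mulVec_mono_of_nonneg (hM : ∀ i j, 0 ≤ M i j) (h : v ≤ w) : M *ᵥ v ≤ M *ᵥ w :=
  fun i => sum_le_sum fun j _ => mul_le_mul_of_nonneg_left (h j) (hM i j)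

lemma mulVec_anti_of_nonpos (hM : ∀ i j, M i j ≤ 0) (h : v ≤ w) : M *ᵥ w ≤ M *ᵥ v :=
  fun i => sum_le_sum fun j _ => mul_le_mul_of_nonpos_left (h j) (hM i j)

end MulVec

section Psi

variable {n : ℕ} (A : Matrix (Fin n) (Fin n) ℝ)

lemma matPos_nonneg (i j : Fin n) : 0 ≤ matPos A i j := by
  simp only [matPos, of_apply]
  linarith [neg_abs_le (A i j)]

lemma matNeg_nonpos (i j : Fin n) : matNeg A i j ≤ 0 := by
  simp only [matNeg, of_apply]
  linarith [le_abs_self (A i j)]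

lemma psiLo_mono {l u l' u' : Fin n → ℝ} (hl : l ≤ l') (hu : u' ≤ u) :
    psiLo A l u ≤ psiLo A l' u' :=
  add_le_add (mulVec_mono_of_nonneg (matPos_nonneg A) hl)
    (mulVec_anti_of_nonpos (matNeg_nonpos A) hu)

lemma psiHi_anti {l u l' u' : Fin n → ℝ} (hl : l ≤ l') (hu : u' ≤ u) :
    psiHi A l' u' ≤ psiHi A l u :=
  add_le_add (mulVec_anti_of_nonpos (matNeg_nonpos A) hl)
    (mulVec_mono_of_nonneg (matPos_nonneg A) hu)

lemma psiHi_sub_psiLo (l u : Fin n → ℝ) :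
    psiHi A l u - psiLo A l u = matAbs A *ᵥ (u - l) := by
  ext i
  simp only [psiHi, psiLo, Pi.add_apply, Pi.sub_apply, mulVec, dotProduct, matPos, matNeg,
    matAbs, of_apply, ← sum_add_distrib, ← sum_sub_distrib]
  exact sum_congr rfl fun j _ => by ring

lemma volBar_psi (l u : Fin n → ℝ) :
    volBar (psiLo A l u) (psiHi A l u) = ∑ i, ∑ j, |A i j| * (u j - l j) := by
  have hwidth (i : Fin n) := congrFun (psiHi_sub_psiLo A l u) i
  simp only [Pi.sub_apply, mulVec, dotProduct, matAbs, of_apply] at hwidth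
  exact sum_congr rfl fun i _ => hwidth i

lemma volBar_psi_sub_volBar_psi_le {l u l' u' : Fin n → ℝ} (hl : l ≤ l') (hu : u' ≤ u) :
    volBar (psiLo A l u) (psiHi A l u) - volBar (psiLo A l' u') (psiHi A l' u')
      ≤ mat1Norm A * (volBar l u - volBar l' u') := by
  set δ : Fin n → ℝ := fun j => (u j - l j) - (u' j - l' j)
  have hδ (j : Fin n) : 0 ≤ δ j := by linarith [hl j, hu j]
  calc volBar (psiLo A l u) (psiHi A l u) - volBar (psiLo A l' u') (psiHi A l' u')
      = ∑ i, ∑ j, |A i j| * δ j := by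
        simp only [volBar_psi, δ, mul_sub, sum_sub_distrib]
    _ ≤ ∑ i, ∑ j, |A i j| * ∑ k, δ k := by
        gcongr with i _ j _
        exact single_le_sum (fun k _ => hδ k) (mem_univ j)
    _ = mat1Norm A * (volBar l u - volBar l' u') := by
        simp only [mat1Norm, volBar, δ, sum_mul, sum_sub_distrib]

end Psi

theorem privacy_level_sandwich_general {n : ℕ}
    (A3 A4 B2 : Matrix (Fin n) (Fin n) ℝ)
    (lx ux lx' ux' ly uy ly' uy' lw uw : Fin n → ℝ)
    (hx₁ : lx ≤ lx') (hx₂ : ux' ≤ ux)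
    (hy₁ : ly ≤ ly') (hy₂ : uy' ≤ uy)
    (loPrior hiPrior loPost hiPost cPrior cPost : Fin n → ℝ)
    (hloPrior : loPrior = psiLo A3 lx ux + psiLo A4 ly uy + psiLo B2 lw uw)
    (hhiPrior : hiPrior = psiHi A3 lx ux + psiHi A4 ly uy + psiHi B2 lw uw)
    (hloPost : loPost = psiLo A3 lx' ux' + psiLo A4 ly' uy' + psiLo B2 lw uw)
    (hhiPost : hiPost = psiHi A3 lx' ux' + psiHi A4 ly' uy' + psiHi B2 lw uw)
    (hcPrior : cPrior = (loPrior + hiPrior) / 2)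
    (hcPost : cPost = (loPost + hiPost) / 2) :
    volBar loPrior hiPrior
        - mat1Norm A3 * (volBar lx ux - volBar lx' ux')
        - mat1Norm A4 * (volBar ly uy - volBar ly' uy')
      ≤ volBar loPost hiPost ∧
    volBar loPost hiPost
      ≤ volBar loPrior hiPrior - 2 * norm1 (cPost - cPrior) := by
  subst hloPrior hhiPrior hloPost hhiPost hcPrior hcPost
  constructor
  · simp only [volBar_add]
    linarith [volBar_psi_sub_volBar_psi_le A3 hx₁ hx₂, volBar_psi_sub_volBar_psi_le A4 hy₁ hy₂]
  · refine volBar_le_sub_norm1_center_sub ?_ ?_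
    · gcongr
      exacts [psiLo_mono A3 hx₁ hx₂, psiLo_mono A4 hy₁ hy₂]
    · gcongr
      exacts [psiHi_anti A3 hx₁ hx₂, psiHi_anti A4 hy₁ hy₂]

/-- Privacy-level sandwich bound (Lemma 4): the posterior surrogate volume is
bounded below by the prior volume minus the weighted uncertainty reductions,
and above by the prior volume minus twice the 1-norm of the center shift. -/
theorem privacy_level_sandwich {n : ℕ}
    (A3 A4 B2 : Matrix (Fin n) (Fin n) ℝ)
    (lx ux lx' ux' ly uy ly' uy' lw uw : Fin n → ℝ)
    (hx₁ : lx ≤ lx') (hx₂ : ux' ≤ ux) (hx' : lx' ≤ ux')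
    (hy₁ : ly ≤ ly') (hy₂ : uy' ≤ uy) (hy' : ly' ≤ uy')
    (hw : lw ≤ uw)
    (loPrior hiPrior loPost hiPost cPrior cPost : Fin n → ℝ)
    (hloPrior : loPrior = psiLo A3 lx ux + psiLo A4 ly uy + psiLo B2 lw uw)
    (hhiPrior : hiPrior = psiHi A3 lx ux + psiHi A4 ly uy + psiHi B2 lw uw)
    (hloPost : loPost = psiLo A3 lx' ux' + psiLo A4 ly' uy' + psiLo B2 lw uw)
    (hhiPost : hiPost = psiHi A3 lx' ux' + psiHi A4 ly' uy' + psiHi B2 lw uw)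
    (hcPrior : cPrior = (loPrior + hiPrior) / 2)
    (hcPost : cPost = (loPost + hiPost) / 2) :
    volBar loPrior hiPrior
        - mat1Norm A3 * (volBar lx ux - volBar lx' ux')
        - mat1Norm A4 * (volBar ly uy - volBar ly' uy')
      ≤ volBar loPost hiPost ∧
    volBar loPost hiPost
      ≤ volBar loPrior hiPrior - 2 * norm1 (cPost - cPrior) :=
  privacy_level_sandwich_general A3 A4 B2 lx ux lx' ux' ly uy ly' uy' lw uw hx₁ hx₂ hy₁ hy₂ loPrior
    hiPrior loPost hiPost cPrior cPost hloPrior hhiPrior hloPost hhiPost hcPrior hcPost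
end
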